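/- Let ψ be a species tree topology on X with |X| = n ≥ 2, let T be a gene tree on X, and let h ∈ H_{ψ,T} be a coalescent history for T relative to ψ. Then Φ_{ψ,T}(h) is a population history for ψ; that is, Σ_{i ∈ I_ψ} Φ_{ψ,T}(h)(i) = n − 1, and for every i ∈ I_ψ, Σ_{j ∈ I_ψ with i ⪰ j} Φ_{ψ,T}(h)(j) ≤ ℓ_i − 1. -/

import Mathlib

/-!
Rooted binary trees with leaves labeled by elements of a finite label set.
Each node of a tree is identified with the subtree rooted at it; since leaf
labels are required to be distinct, this identification is faithful.
-/

inductive RBT (α : Type) where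
  | leaf (x : α)
  | node (l r : RBT α)
deriving DecidableEq

namespace RBT

variable {α : Type} [DecidableEq α]

/-- The list of leaf labels, left to right. -/
def leafList : RBT α → List α
  | leaf x => [x]
  | node l r => l.leafList ++ r.leafList

/-- The clade of a node: the set of labels of leaves descended from or equal to it. -/
def clade (t : RBT α) : Finset α := t.leafList.toFinset

/-- `t` is a rooted binary tree on the label set `X`: its leaf labels are
distinct and form exactly the set `X`. -/
def IsTreeOn (t : RBT α) (X : Finset α) : Prop :=
  t.leafList.Nodup ∧ t.clade = X

/-- All nodes of a tree, each identified with the subtree rooted at it. -/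
def subtrees : RBT α → Finset (RBT α)
  | leaf x => {leaf x}
  | node l r => insert (node l r) (subtrees l ∪ subtrees r)

/-- `Anc i j` means node `i` is ancestral to or equal to node `j`, i.e. `i ⪰ j`. -/
def Anc (i j : RBT α) : Prop := j ∈ i.subtrees

instance (i j : RBT α) : Decidable (Anc i j) :=
  inferInstanceAs (Decidable (j ∈ i.subtrees))

/-- Whether a node is internal (a non-leaf). -/
def isInternal : RBT α → Bool
  | leaf _ => false
  | node _ _ => true

/-- The internal nodes of a tree. -/
def internals (t : RBT α) : Finset (RBT α) :=
  t.subtrees.filter fun s => s.isInternal = true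

/-- A coalescent history for a gene tree `T` relative to a species tree
topology `ψ`: a map `h : I_T → I_ψ` such that the clade of `j` is contained in
the clade of `h j` for every internal node `j` of `T`, and `h i ⪰ h j` in `ψ`
whenever `i ⪰ j` in `T`. -/
def IsCoalHistory (ψ T : RBT α) (h : ↥T.internals → ↥ψ.internals) : Prop :=
  (∀ j : ↥T.internals, (j : RBT α).clade ⊆ ((h j : RBT α)).clade) ∧
  ∀ i j : ↥T.internals, Anc (i : RBT α) (j : RBT α) →
    Anc (h i : RBT α) ((h j : RBT α))

/-- The set `H_{ψ,T}` of coalescent histories for `T` relative to `ψ`. -/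
def coalHistories (ψ T : RBT α) : Set (↥T.internals → ↥ψ.internals) :=
  {h | IsCoalHistory ψ T h}

/-- The map `Φ_{ψ,T}`: from a coalescent history, record only the number of
coalescent events `|h⁻¹(i)|` occurring at each internal node `i` of `ψ`. -/
def Phi (ψ T : RBT α) (h : ↥T.internals → ↥ψ.internals) : ↥ψ.internals → ℕ :=
  fun i => (Finset.univ.filter fun j : ↥T.internals => h j = i).card

/-- A population history for `ψ`, where `n` is the number of taxa: a map
`y : I_ψ → ℕ` with total sum `n - 1` such that, for every internal node `i`,
the sum of `y` over internal nodes `j` with `i ⪰ j` is at most `ℓ_i - 1`. -/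
def IsPopHistory (ψ : RBT α) (n : ℕ) (y : ↥ψ.internals → ℕ) : Prop :=
  (∑ i : ↥ψ.internals, y i = n - 1) ∧
  ∀ i : ↥ψ.internals,
    (∑ j ∈ Finset.univ.filter
        (fun j : ↥ψ.internals => Anc (i : RBT α) (j : RBT α)), y j)
      ≤ (i : RBT α).clade.card - 1

/-- The set `Y_ψ` of population histories for `ψ` on `n` taxa. -/
def popHistories (ψ : RBT α) (n : ℕ) : Set (↥ψ.internals → ℕ) :=
  {y | IsPopHistory ψ n y}

/-- A caterpillar: a rooted binary tree whose internal nodes are totally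
ordered by the ancestry relation. -/
def IsCaterpillar (T : RBT α) : Prop :=
  ∀ i ∈ T.internals, ∀ j ∈ T.internals, Anc i j ∨ Anc j i

/-- The set of clades of a tree. -/
def cladeSet (t : RBT α) : Set (Finset α) :=
  {s | ∃ v ∈ t.subtrees, v.clade = s}

/-! ### Auxiliary lemmas -/

lemma leafList_length_pos (t : RBT α) : 1 ≤ t.leafList.length := by
  induction t with
  | leaf x => simp [leafList]
  | node l r ihl ihr => simp only [leafList, List.length_append]; omega

lemma mem_subtrees_self (t : RBT α) : t ∈ t.subtrees := by
  cases t <;> simp [subtrees]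

lemma length_le_of_mem_subtrees {u t : RBT α} (hu : u ∈ t.subtrees) :
    u.leafList.length ≤ t.leafList.length := by
  induction t with
  | leaf x => simp [subtrees] at hu; subst hu; rfl
  | node l r ihl ihr =>
    simp only [subtrees, Finset.mem_insert, Finset.mem_union] at hu
    rcases hu with rfl | hu | hu
    · rfl
    · exact le_trans (ihl hu) (by simp only [leafList, List.length_append]; omega)
    · exact le_trans (ihr hu) (by simp only [leafList, List.length_append]; omega)

lemma clade_subset_of_mem_subtrees {u t : RBT α} (hu : u ∈ t.subtrees) :
    u.clade ⊆ t.clade := by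
  induction t with
  | leaf x => simp [subtrees] at hu; subst hu; rfl
  | node l r ihl ihr =>
    simp only [subtrees, Finset.mem_insert, Finset.mem_union] at hu
    have hcl : (node l r).clade = l.clade ∪ r.clade := by
      simp [clade, leafList]
    rcases hu with rfl | hu | hu
    · rfl
    · exact (ihl hu).trans (hcl ▸ Finset.subset_union_left)
    · exact (ihr hu).trans (hcl ▸ Finset.subset_union_right)

lemma internals_node (l r : RBT α) :
    (node l r).internals = insert (node l r) (l.internals ∪ r.internals) := by
  unfold internals
  rw [subtrees, Finset.filter_insert, Finset.filter_union]
  exact if_pos rfl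

lemma node_not_mem_internals_union (l r : RBT α) :
    node l r ∉ l.internals ∪ r.internals := by
  intro hmem
  rcases Finset.mem_union.mp hmem with hm | hm <;>
    have := length_le_of_mem_subtrees (Finset.mem_filter.mp hm).1 <;>
    simp only [leafList, List.length_append] at this <;>
    [have := leafList_length_pos r; have := leafList_length_pos l] <;> omega

lemma disjoint_internals {l r : RBT α} (hnd : (node l r).leafList.Nodup) :
    Disjoint l.internals r.internals := by
  rw [Finset.disjoint_left]
  intro u hul hur
  have h1 : u.clade ⊆ l.clade :=
    clade_subset_of_mem_subtrees (Finset.mem_filter.mp hul).1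
  have h2 : u.clade ⊆ r.clade :=
    clade_subset_of_mem_subtrees (Finset.mem_filter.mp hur).1
  have hdisj : l.leafList.Disjoint r.leafList := by
    simp only [leafList, List.nodup_append] at hnd
    exact fun a ha hb => hnd.2.2 a ha a hb rfl
  have hne : u.clade.Nonempty := by
    have := leafList_length_pos u
    rcases hu : u.leafList with _ | ⟨a, tl⟩
    · simp [hu] at this
    · exact ⟨a, by simp [clade, hu]⟩
  obtain ⟨a, ha⟩ := hne
  exact absurd (List.mem_toFinset.mp (h2 ha))
    (hdisj (List.mem_toFinset.mp (h1 ha)))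

lemma internals_card {t : RBT α} (hnd : t.leafList.Nodup) :
    t.internals.card = t.leafList.length - 1 := by
  induction t with
  | leaf x =>
    have he : (leaf x : RBT α).internals = ∅ := rfl
    simp [he, leafList]
  | node l r ihl ihr =>
    have hndl : l.leafList.Nodup := by
      simp only [leafList, List.nodup_append] at hnd; exact hnd.1
    have hndr : r.leafList.Nodup := by
      simp only [leafList, List.nodup_append] at hnd; exact hnd.2.1
    rw [internals_node,
      Finset.card_insert_of_notMem (node_not_mem_internals_union l r),
      Finset.card_union_of_disjoint (disjoint_internals hnd), ihl hndl,
      ihr hndr]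
    have h1 := leafList_length_pos l
    have h2 := leafList_length_pos r
    simp only [leafList, List.length_append]
    omega

lemma clade_card {t : RBT α} (hnd : t.leafList.Nodup) :
    t.clade.card = t.leafList.length :=
  List.toFinset_card_of_nodup hnd

lemma disjoint_clade {l r : RBT α} (hnd : (node l r).leafList.Nodup) :
    Disjoint l.clade r.clade := by
  have hdisj : l.leafList.Disjoint r.leafList := by
    simp only [leafList, List.nodup_append] at hnd
    exact fun a ha hb => hnd.2.2 a ha a hb rfl
  exact List.disjoint_toFinset_iff_disjoint.mpr hdisj

/-- Key counting lemma: the number of internal nodes of `t` whose clade is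
contained in `S` is at most `|t.clade ∩ S| - 1`. -/
lemma card_internals_filter_subset (t : RBT α) (S : Finset α)
    (hnd : t.leafList.Nodup) :
    (t.internals.filter fun u => u.clade ⊆ S).card ≤ (t.clade ∩ S).card - 1 := by
  induction t with
  | leaf x =>
    have he : (leaf x : RBT α).internals = ∅ := rfl
    simp [he]
  | node l r ihl ihr =>
    have hndl : l.leafList.Nodup := by
      simp only [leafList, List.nodup_append] at hnd; exact hnd.1
    have hndr : r.leafList.Nodup := by
      simp only [leafList, List.nodup_append] at hnd; exact hnd.2.1
    have hcl : (node l r).clade = l.clade ∪ r.clade := by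
      simp [clade, leafList]
    have hinter : ((node l r).clade ∩ S).card
        = (l.clade ∩ S).card + (r.clade ∩ S).card := by
      rw [hcl, Finset.union_inter_distrib_right]
      exact Finset.card_union_of_disjoint
        (Finset.disjoint_of_subset_left Finset.inter_subset_left
          (Finset.disjoint_of_subset_right Finset.inter_subset_left
            (disjoint_clade hnd)))
    have hl := ihl hndl
    have hr := ihr hndr
    have hu : (((l.internals ∪ r.internals).filter fun u => u.clade ⊆ S).card)
        ≤ (l.internals.filter fun u => u.clade ⊆ S).card
          + (r.internals.filter fun u => u.clade ⊆ S).card := by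
      rw [Finset.filter_union]
      exact Finset.card_union_le _ _
    rw [internals_node, Finset.filter_insert, hinter]
    split_ifs with hsub
    · have hlsub : l.clade ⊆ S := fun a ha =>
        hsub (hcl ▸ Finset.mem_union_left _ ha)
      have hrsub : r.clade ⊆ S := fun a ha =>
        hsub (hcl ▸ Finset.mem_union_right _ ha)
      have h1 : 1 ≤ (l.clade ∩ S).card := by
        rw [Finset.inter_eq_left.mpr hlsub, clade_card hndl]
        exact leafList_length_pos l
      have h2 : 1 ≤ (r.clade ∩ S).card := by
        rw [Finset.inter_eq_left.mpr hrsub, clade_card hndr]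
        exact leafList_length_pos r
      have hins := Finset.card_insert_le (node l r)
        ((l.internals ∪ r.internals).filter fun u => u.clade ⊆ S)
      omega
    · omega

end RBT

/-- For any coalescent history `h ∈ H_{ψ,T}`, the tuple
`Φ_{ψ,T}(h)` is a population history for `ψ`: its entries sum to `n - 1`, and
for every internal node `i` of `ψ` the sum of its entries over internal nodes
`j` with `i ⪰ j` is at most `ℓ_i - 1`. -/
theorem Phi_of_history_is_popHistory
    {α : Type} [DecidableEq α] (X : Finset α) (n : ℕ)
    (hn : X.card = n) (h2 : 2 ≤ n)
    (ψ T : RBT α) (hψ : ψ.IsTreeOn X) (hT : T.IsTreeOn X)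
    (h : ↥T.internals → ↥ψ.internals) (hh : h ∈ RBT.coalHistories ψ T) :
    RBT.IsPopHistory ψ n (RBT.Phi ψ T h) := by
  obtain ⟨hhc, hha⟩ := hh
  have hTcard : T.internals.card = n - 1 := by
    rw [RBT.internals_card hT.1, ← RBT.clade_card hT.1, hT.2, hn]
  constructor
  · -- total sum is n - 1
    have := Finset.card_eq_sum_card_fiberwise
      (f := h) (s := Finset.univ) (t := Finset.univ)
      (fun x _ => Finset.mem_univ _)
    rw [Finset.card_univ, Fintype.card_coe, hTcard] at this
    exact (this.symm : _)
  · -- per-node bound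
    intro i
    set K : Finset ↥T.internals :=
      Finset.univ.filter (fun k => RBT.Anc (i : RBT α) ((h k : RBT α))) with hK
    have hsum : (∑ j ∈ Finset.univ.filter
        (fun j : ↥ψ.internals => RBT.Anc (i : RBT α) (j : RBT α)),
        RBT.Phi ψ T h j) = K.card := by
      rw [Finset.card_eq_sum_card_fiberwise
        (f := h) (s := K)
        (t := Finset.univ.filter
          (fun j : ↥ψ.internals => RBT.Anc (i : RBT α) (j : RBT α)))
        (fun x hx => by
          simp only [hK, Finset.mem_coe, Finset.mem_filter, Finset.mem_univ, true_and] at hx ⊢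
          exact hx)]
      apply Finset.sum_congr rfl
      intro j hj
      simp only [Finset.mem_filter, Finset.mem_univ, true_and] at hj
      unfold RBT.Phi
      congr 1
      ext k
      simp only [hK, Finset.mem_filter, Finset.mem_univ, true_and]
      exact ⟨fun hk => ⟨by rw [hk]; exact hj, hk⟩, fun hk => hk.2⟩
    rw [hsum]
    -- map K injectively into internal nodes of T with clade ⊆ clade i
    have hKle : K.card ≤
        (T.internals.filter fun u => u.clade ⊆ (i : RBT α).clade).card := by
      apply Finset.card_le_card_of_injOn (fun k : ↥T.internals => (k : RBT α))
      · intro k hk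
        simp only [hK, Finset.mem_coe, Finset.mem_filter, Finset.mem_univ, true_and] at hk
        refine Finset.mem_filter.mpr ⟨k.2, ?_⟩
        exact (hhc k).trans (RBT.clade_subset_of_mem_subtrees hk)
      · exact fun a _ b _ hab => Subtype.ext hab
    have hiX : (i : RBT α).clade ⊆ T.clade := by
      rw [hT.2, ← hψ.2]
      exact RBT.clade_subset_of_mem_subtrees (Finset.mem_filter.mp i.2).1
    have := RBT.card_internals_filter_subset T (i : RBT α).clade hT.1
    rw [Finset.inter_eq_right.mpr hiX] at this
    exact hKle.trans this
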